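/- arXiv:2603.09516 — 2 statements merged into one kernel-verified Lean document; each statement's English description precedes it below -/
import Mathlib

section
/- Let K be a field, E a finite type, M a matroid on E, F a flat of M of corank 2, and 𝓗_F the set of hyperplanes of M containing F. Suppose given for each H ∈ 𝓗_F a vector η_H ∈ K^E with supp(η_H) = E ∖ H. Then the following are equivalent: (i) for every triple of pairwise distinct hyperplanes H₁, H₂, H₃ ∈ 𝓗_F, the vectors η_{H₁}, η_{H₂}, η_{H₃} are K-linearly dependent; (ii) there exists a 2-dimensional linear subspace L ⊆ K^E with η_H ∈ L for all H ∈ 𝓗_F. In that case L = span{η_H : H ∈ 𝓗_F} is the unique such subspace, and the matroid M_L satisfies rank_{M_L}(A) = rank_M(A ∪ F) − rank_M(F) for every A ⊆ E. -/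
open Set Function Module Submodule

/-- The coordinate projection `K^E → K^S` for a subset `S ⊆ E`. -/
def proj (K : Type*) [Semiring K] {E : Type*} (S : Set E) : (E → K) →ₗ[K] (↥S → K) :=
  LinearMap.funLeft K K Subtype.val

/-- The rank function of a matroid: the size of a largest independent subset of `S`. -/
noncomputable def mrk {E : Type*} (M : Matroid E) (S : Set E) : ℕ :=
  sSup (Set.ncard '' {I : Set E | M.Indep I ∧ I ⊆ S})

/-- A hyperplane of a matroid: a flat of rank one less than the rank of the matroid. -/
def IsHyperplaneOf {E : Type*} (M : Matroid E) (H : Set E) : Prop :=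
  M.IsFlat H ∧ mrk M H + 1 = mrk M M.E

/-- `M` is the matroid `M_W` of the linear subspace `W ⊆ K^E`: its ground set is all of `E`
and its rank function is `S ↦ dim_K π_S(W)`. -/
def IsMatroidOf {K E : Type*} [Field K] (M : Matroid E) (W : Submodule K (E → K)) : Prop :=
  M.E = Set.univ ∧ ∀ S : Set E, mrk M S = Module.finrank K ↥(W.map (proj K S))

/-!
Two distinct hyperplanes over the corank-two flat `F` meet exactly in `F`, so their vectors have
incomparable supports and are linearly independent. Hence the span of all `η_H` has dimension at
least two; it has dimension exactly two iff every triple is dependent, and then it is the only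
plane containing all `η_H`.

The key point is that for `x ∉ F`, evaluation at `x` is a nonzero functional on that plane `L`
whose kernel contains `η_H` for the hyperplane `H = cl(F ∪ {x})`; so a nonzero vector of `L`
vanishing at `x` is a multiple of `η_H`, and its zero set is `H`. Consequently `dim π_A(L)` is `0`
iff `A ⊆ F`, and at most `1` iff `A` lies in a hyperplane over `F`, which are exactly the
conditions for `rank(A ∪ F) - rank F` to be `0`, resp. at most `1`.
-/

namespace Matroid

variable {E : Type*} {M : Matroid E} {I S T F G : Set E} {e : E}

lemma IsFlat.inter (hF : M.IsFlat F) (hG : M.IsFlat G) : M.IsFlat (F ∩ G) := by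
  rw [inter_eq_iInter]
  exact IsFlat.iInter (by rintro (_ | _) <;> assumption)

variable [Finite E]

lemma mrk_eq_ncard (hI : M.IsBasis' I S) : mrk M S = I.ncard := by
  refine IsGreatest.csSup_eq ⟨⟨I, ⟨hI.indep, hI.subset⟩, rfl⟩, ?_⟩
  rintro _ ⟨J, ⟨hJ, hJS⟩, rfl⟩
  have h := hJ.encard_le_eRk_of_subset hJS
  rw [← hI.encard_eq_eRk, ← J.toFinite.cast_ncard_eq, ← I.toFinite.cast_ncard_eq] at h
  exact_mod_cast h

lemma coe_mrk (M : Matroid E) (S : Set E) : (mrk M S : ℕ∞) = M.eRk S := by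
  obtain ⟨I, hI⟩ := M.exists_isBasis' S
  rw [mrk_eq_ncard hI, I.toFinite.cast_ncard_eq, hI.encard_eq_eRk]

lemma mrk_mono (M : Matroid E) (h : S ⊆ T) : mrk M S ≤ mrk M T := by
  have := M.eRk_mono h
  rwa [← coe_mrk, ← coe_mrk, Nat.cast_le] at this

lemma mrk_closure (M : Matroid E) (S : Set E) : mrk M (M.closure S) = mrk M S := by
  rw [← Nat.cast_inj (R := ℕ∞), coe_mrk, coe_mrk, eRk_closure_eq]

lemma IsFlat.mrk_insert (hF : M.IsFlat F) (he : e ∈ M.E) (heF : e ∉ F) :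
    mrk M (insert e F) = mrk M F + 1 := by
  rw [← Nat.cast_inj (R := ℕ∞), Nat.cast_add, coe_mrk, coe_mrk, Nat.cast_one]
  exact eRk_insert_eq_add_one ⟨he, hF.closure.symm ▸ heF⟩

lemma IsFlat.eq_of_subset_of_mrk_le (hF : M.IsFlat F) (hG : M.IsFlat G) (hFG : F ⊆ G)
    (h : mrk M G ≤ mrk M F) : F = G := by
  rw [← Nat.cast_le (α := ℕ∞), coe_mrk, coe_mrk] at h
  rw [← hF.closure, ← hG.closure]
  exact (M.isRkFinite_of_finite F.toFinite).closure_eq_closure_of_subset_of_eRk_ge_eRk hFG h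

end Matroid

section Hyperplanes

variable {E : Type*} {M : Matroid E} {F A H H' : Set E} {a : E}

def hyperplanesOver (M : Matroid E) (F : Set E) : Set (Set E) :=
  {H | IsHyperplaneOf M H ∧ F ⊆ H}

structure IsCorankTwoFlat (M : Matroid E) (F : Set E) : Prop where
  ground_eq : M.E = univ
  isFlat : M.IsFlat F
  mrk_add_two : mrk M F + 2 = mrk M univ

namespace IsCorankTwoFlat

open Matroid

lemma mrk_eq_add_one_of_mem (hF : IsCorankTwoFlat M F) (hH : H ∈ hyperplanesOver M F) :
    mrk M H = mrk M F + 1 := by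
  have := hH.1.2
  rw [hF.ground_eq] at this
  have := hF.mrk_add_two
  omega

lemma exists_notMem_of_mem (hF : IsCorankTwoFlat M F) (hH : H ∈ hyperplanesOver M F) :
    ∃ a, a ∉ H := by
  by_contra! h
  have := hF.mrk_eq_add_one_of_mem hH
  rw [eq_univ_of_forall h, ← hF.mrk_add_two] at this
  omega

variable [Finite E]

lemma closure_union_mem (hF : IsCorankTwoFlat M F) (h : mrk M (A ∪ F) = mrk M F + 1) :
    M.closure (A ∪ F) ∈ hyperplanesOver M F := by
  refine ⟨⟨M.isFlat_closure _, ?_⟩, ?_⟩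
  · rw [mrk_closure, h, hF.ground_eq, ← hF.mrk_add_two]
  · exact subset_union_right.trans (M.subset_closure _ (hF.ground_eq ▸ subset_univ _))

lemma exists_mem_of_notMem (hF : IsCorankTwoFlat M F) (ha : a ∉ F) :
    ∃ H ∈ hyperplanesOver M F, a ∈ H := by
  have h := hF.isFlat.mrk_insert (hF.ground_eq ▸ mem_univ a) ha
  rw [insert_eq] at h
  exact ⟨_, hF.closure_union_mem h,
    M.subset_closure _ (hF.ground_eq ▸ subset_univ _) (mem_union_left _ rfl)⟩

lemma eq_of_subset (hF : IsCorankTwoFlat M F) (hH : H ∈ hyperplanesOver M F)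
    (hH' : H' ∈ hyperplanesOver M F) (h : H ⊆ H') : H = H' :=
  hH.1.1.eq_of_subset_of_mrk_le hH'.1.1 h <| by
    rw [hF.mrk_eq_add_one_of_mem hH, hF.mrk_eq_add_one_of_mem hH']

lemma inter_eq (hF : IsCorankTwoFlat M F) (hH : H ∈ hyperplanesOver M F)
    (hH' : H' ∈ hyperplanesOver M F) (hne : H ≠ H') : H ∩ H' = F := by
  have hflat := hH.1.1.inter hH'.1.1
  by_contra hF'
  have hlt : mrk M F < mrk M (H ∩ H') := by
    by_contra! hle
    exact hF' (hF.isFlat.eq_of_subset_of_mrk_le hflat (subset_inter hH.2 hH'.2) hle).symm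
  have h₁ := hflat.eq_of_subset_of_mrk_le hH.1.1 inter_subset_left
    (by rw [hF.mrk_eq_add_one_of_mem hH]; omega)
  have h₂ := hflat.eq_of_subset_of_mrk_le hH'.1.1 inter_subset_right
    (by rw [hF.mrk_eq_add_one_of_mem hH']; omega)
  exact hne (h₁.symm.trans h₂)

lemma exists_notMem_of_notMem (hF : IsCorankTwoFlat M F) (ha : a ∉ F) :
    ∃ H ∈ hyperplanesOver M F, a ∉ H := by
  obtain ⟨H, hH, haH⟩ := hF.exists_mem_of_notMem ha
  obtain ⟨b, hb⟩ := hF.exists_notMem_of_mem hH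
  obtain ⟨H', hH', hbH'⟩ := hF.exists_mem_of_notMem fun hbF => hb (hH.2 hbF)
  have hne : H ≠ H' := by rintro rfl; exact hb hbH'
  exact ⟨H', hH', fun haH' => ha (hF.inter_eq hH hH' hne ▸ ⟨haH, haH'⟩)⟩

lemma exists_ne (hF : IsCorankTwoFlat M F) :
    ∃ H₁ ∈ hyperplanesOver M F, ∃ H₂ ∈ hyperplanesOver M F, H₁ ≠ H₂ := by
  obtain ⟨a, ha⟩ : ∃ a, a ∉ F := by
    by_contra! h
    have := hF.mrk_add_two
    rw [eq_univ_of_forall h] at this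
    omega
  obtain ⟨H₁, hH₁, haH₁⟩ := hF.exists_mem_of_notMem ha
  obtain ⟨H₂, hH₂, haH₂⟩ := hF.exists_notMem_of_notMem ha
  exact ⟨H₁, hH₁, H₂, hH₂, by rintro rfl; exact haH₂ haH₁⟩

lemma mrk_union_le_iff (hF : IsCorankTwoFlat M F) : mrk M (A ∪ F) ≤ mrk M F ↔ A ⊆ F := by
  refine ⟨fun h => ?_, fun h => by rw [union_eq_self_of_subset_left h]⟩
  have hcl := hF.isFlat.eq_of_subset_of_mrk_le (M.isFlat_closure (A ∪ F))
    (subset_union_right.trans (M.subset_closure _ (hF.ground_eq ▸ subset_univ _)))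
    (by rwa [mrk_closure])
  exact subset_union_left.trans <|
    (M.subset_closure _ (hF.ground_eq ▸ subset_univ _)).trans hcl.symm.subset

lemma mrk_union_le_add_one_iff (hF : IsCorankTwoFlat M F) :
    mrk M (A ∪ F) ≤ mrk M F + 1 ↔ ∃ H ∈ hyperplanesOver M F, A ⊆ H := by
  constructor
  · intro h
    rcases h.lt_or_eq with h | h
    · obtain ⟨H₁, hH₁, -⟩ := hF.exists_ne
      exact ⟨H₁, hH₁, (hF.mrk_union_le_iff.1 (by omega)).trans hH₁.2⟩
    · exact ⟨_, hF.closure_union_mem h,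
        subset_union_left.trans (M.subset_closure _ (hF.ground_eq ▸ subset_univ _))⟩
  · rintro ⟨H, hH, hAH⟩
    exact (mrk_mono M (union_subset hAH hH.2)).trans (hF.mrk_eq_add_one_of_mem hH).le

end IsCorankTwoFlat

end Hyperplanes

section LinearAlgebra

variable {K V W : Type*} [Field K] [AddCommGroup V] [Module K V] [AddCommGroup W] [Module K W]

lemma Submodule.finrank_map_lt_iff {L : Submodule K V} [FiniteDimensional K L] (f : V →ₗ[K] W) :
    finrank K (L.map f) < finrank K L ↔ ∃ v ∈ L, f v = 0 ∧ v ≠ 0 := by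
  have hrn := (f.domRestrict L).finrank_range_add_finrank_ker
  rw [LinearMap.range_domRestrict] at hrn
  rw [show finrank K (L.map f) < finrank K L ↔ 0 < finrank K (LinearMap.ker (f.domRestrict L))
    by omega, Nat.pos_iff_ne_zero, Ne, Submodule.finrank_eq_zero, ← Ne, Submodule.ne_bot_iff]
  simp [and_left_comm]

lemma not_linearIndependent_of_finrank_lt {ι : Type*} [Fintype ι] {L : Submodule K V}
    [FiniteDimensional K L] {v : ι → V} (hv : ∀ i, v i ∈ L) (h : finrank K L < Fintype.card ι) :
    ¬ LinearIndependent K v := by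
  intro hli
  have := Submodule.finrank_mono (span_le.2 (range_subset_iff.2 hv))
  rw [finrank_span_eq_card hli] at this
  omega

lemma not_linearIndependent_pair_of_map_eq_zero {L : Submodule K V} (hL : finrank K L = 2)
    {f : V →ₗ[K] W} {u v w : V} (hu : u ∈ L) (hv : v ∈ L) (hw : w ∈ L) (hfu : f u = 0)
    (hfv : f v = 0) (hfw : f w ≠ 0) : ¬ LinearIndependent K ![u, v] := by
  intro hli
  have : FiniteDimensional K L := Module.finite_of_finrank_eq_succ hL
  have hspan : span K {u, v} = L := by
    refine eq_of_le_of_finrank_eq (span_le.2 (insert_subset hu (singleton_subset_iff.2 hv))) ?_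
    rw [hL, ← Matrix.range_cons_cons_empty u v ![], finrank_span_eq_card hli, Fintype.card_fin]
  obtain ⟨a, b, rfl⟩ := mem_span_pair.1 (hspan ▸ hw)
  simp [hfu, hfv] at hfw

lemma linearIndependent_pair_of_apply {E : Type*} {x y : E → K} {i j : E} (hxi : x i ≠ 0)
    (hyi : y i = 0) (hxj : x j = 0) (hyj : y j ≠ 0) : LinearIndependent K ![x, y] := by
  refine LinearIndependent.pair_iff.2 fun s t hst => ?_
  have hi := congrFun hst i
  have hj := congrFun hst j
  simp only [Pi.add_apply, Pi.smul_apply, smul_eq_mul, Pi.zero_apply, hyi, hxj, mul_zero,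
    add_zero, zero_add] at hi hj
  exact ⟨(mul_eq_zero.1 hi).resolve_right hxi, (mul_eq_zero.1 hj).resolve_right hyj⟩

end LinearAlgebra

section Vectors

variable {K E : Type*} [Field K] {M : Matroid E} {F A H H₁ H₂ : Set E} {η : Set E → E → K}

def HasComplementarySupports (𝓗 : Set (Set E)) (η : Set E → E → K) : Prop :=
  ∀ H ∈ 𝓗, support (η H) = univ \ H

lemma HasComplementarySupports.apply_eq_zero_iff {𝓗 : Set (Set E)}
    (hη : HasComplementarySupports 𝓗 η) (hH : H ∈ 𝓗) {x : E} : η H x = 0 ↔ x ∈ H := by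
  rw [← notMem_support, hη H hH]
  simp

lemma proj_eq_zero_iff {v : E → K} : proj K A v = 0 ↔ ∀ a ∈ A, v a = 0 := by
  simp [funext_iff, proj]

namespace IsCorankTwoFlat

lemma ne_zero (hF : IsCorankTwoFlat M F) (hη : HasComplementarySupports (hyperplanesOver M F) η)
    (hH : H ∈ hyperplanesOver M F) : η H ≠ 0 := by
  obtain ⟨a, ha⟩ := hF.exists_notMem_of_mem hH
  exact fun h => ha ((hη.apply_eq_zero_iff hH).1 (by rw [h]; rfl))

variable [Finite E]

lemma linearIndependent_pair (hF : IsCorankTwoFlat M F)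
    (hη : HasComplementarySupports (hyperplanesOver M F) η) (hH₁ : H₁ ∈ hyperplanesOver M F)
    (hH₂ : H₂ ∈ hyperplanesOver M F) (hne : H₁ ≠ H₂) : LinearIndependent K ![η H₁, η H₂] := by
  obtain ⟨x, hx₂, hx₁⟩ := not_subset.1 fun h => hne (hF.eq_of_subset hH₂ hH₁ h).symm
  obtain ⟨y, hy₁, hy₂⟩ := not_subset.1 fun h => hne (hF.eq_of_subset hH₁ hH₂ h)
  exact linearIndependent_pair_of_apply (i := x) (j := y)
    (mt (hη.apply_eq_zero_iff hH₁).1 hx₁) ((hη.apply_eq_zero_iff hH₂).2 hx₂)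
    ((hη.apply_eq_zero_iff hH₁).2 hy₁) (mt (hη.apply_eq_zero_iff hH₂).1 hy₂)

lemma two_le_finrank_span (hF : IsCorankTwoFlat M F)
    (hη : HasComplementarySupports (hyperplanesOver M F) η) :
    2 ≤ finrank K (span K (η '' hyperplanesOver M F)) := by
  obtain ⟨H₁, hH₁, H₂, hH₂, hne⟩ := hF.exists_ne
  have hli := hF.linearIndependent_pair hη hH₁ hH₂ hne
  calc 2 = finrank K (span K (range ![η H₁, η H₂])) := by
        rw [finrank_span_eq_card hli, Fintype.card_fin]
    _ ≤ _ := Submodule.finrank_mono <| span_mono <| range_subset_iff.2 <| by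
        simpa [Fin.forall_fin_two] using ⟨mem_image_of_mem η hH₁, mem_image_of_mem η hH₂⟩

lemma eq_span_of_finrank_eq_two (hF : IsCorankTwoFlat M F)
    (hη : HasComplementarySupports (hyperplanesOver M F) η) {L : Submodule K (E → K)}
    (hL : finrank K L = 2) (hmem : ∀ H ∈ hyperplanesOver M F, η H ∈ L) :
    L = span K (η '' hyperplanesOver M F) :=
  (eq_of_le_of_finrank_le (span_le.2 (image_subset_iff.2 hmem))
    (hL.trans_le (hF.two_le_finrank_span hη))).symm

lemma finrank_span_eq_two (hF : IsCorankTwoFlat M F)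
    (hη : HasComplementarySupports (hyperplanesOver M F) η)
    (h : ∀ H₁ ∈ hyperplanesOver M F, ∀ H₂ ∈ hyperplanesOver M F, ∀ H₃ ∈ hyperplanesOver M F,
      H₁ ≠ H₂ → H₁ ≠ H₃ → H₂ ≠ H₃ → ¬ LinearIndependent K ![η H₁, η H₂, η H₃]) :
    finrank K (span K (η '' hyperplanesOver M F)) = 2 := by
  obtain ⟨H₁, hH₁, H₂, hH₂, hne⟩ := hF.exists_ne
  have hli := hF.linearIndependent_pair hη hH₁ hH₂ hne
  have hle : span K (η '' hyperplanesOver M F) ≤ span K (range ![η H₁, η H₂]) := by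
    refine span_le.2 (image_subset_iff.2 fun H hH => ?_)
    by_cases h₁ : H = H₁
    · exact subset_span ⟨0, by simp [h₁]⟩
    by_cases h₂ : H = H₂
    · exact subset_span ⟨1, by simp [h₂]⟩
    have := h H hH H₁ hH₁ H₂ hH₂ h₁ h₂ hne
    rw [Matrix.vecCons, linearIndependent_finCons] at this
    simpa [hli] using this
  refine le_antisymm ?_ (hF.two_le_finrank_span hη)
  calc _ ≤ finrank K (span K (range ![η H₁, η H₂])) := Submodule.finrank_mono hle
    _ = 2 := by rw [finrank_span_eq_card hli, Fintype.card_fin]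

lemma exists_superset_of_forall_eq_zero (hF : IsCorankTwoFlat M F)
    (hη : HasComplementarySupports (hyperplanesOver M F) η) {L : Submodule K (E → K)}
    (hL : finrank K L = 2) (hmem : ∀ H ∈ hyperplanesOver M F, η H ∈ L) {v : E → K}
    (hv : v ∈ L) (hv0 : v ≠ 0) (hvA : ∀ a ∈ A, v a = 0) :
    ∃ H ∈ hyperplanesOver M F, A ⊆ H := by
  by_cases hAF : A ⊆ F
  · obtain ⟨H, hH, -⟩ := hF.exists_ne
    exact ⟨H, hH, hAF.trans hH.2⟩
  obtain ⟨x, hxA, hxF⟩ := not_subset.1 hAF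
  obtain ⟨H, hH, hxH⟩ := hF.exists_mem_of_notMem hxF
  obtain ⟨H', hH', hxH'⟩ := hF.exists_notMem_of_notMem hxF
  -- Evaluation at `x` is a nonzero functional on the plane `L`; its kernel is the line of `η H`.
  have hdep := not_linearIndependent_pair_of_map_eq_zero hL (f := LinearMap.proj x)
    (hmem H hH) hv (hmem H' hH') ((hη.apply_eq_zero_iff hH).2 hxH) (hvA x hxA)
    (mt (hη.apply_eq_zero_iff hH').1 hxH')
  obtain ⟨c, rfl⟩ := by simpa [LinearIndependent.pair_iff' (hF.ne_zero hη hH)] using hdep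
  refine ⟨H, hH, fun a ha => (hη.apply_eq_zero_iff hH).1 ?_⟩
  have hc : c ≠ 0 := by rintro rfl; exact hv0 (zero_smul K _)
  simpa [hc] using hvA a ha

lemma finrank_map_proj_eq_zero_iff (hF : IsCorankTwoFlat M F)
    (hη : HasComplementarySupports (hyperplanesOver M F) η) :
    finrank K ((span K (η '' hyperplanesOver M F)).map (proj K A)) = 0 ↔ A ⊆ F := by
  rw [Submodule.finrank_eq_zero, ← LinearMap.le_ker_iff_map, span_le, image_subset_iff]
  constructor
  · intro h x hxA
    by_contra hxF
    obtain ⟨H, hH, hxH⟩ := hF.exists_notMem_of_notMem hxF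
    exact hxH ((hη.apply_eq_zero_iff hH).1 (proj_eq_zero_iff.1 (h hH) x hxA))
  · exact fun hAF H hH =>
      proj_eq_zero_iff.2 fun a ha => (hη.apply_eq_zero_iff hH).2 (hH.2 (hAF ha))

lemma finrank_map_proj_le_one_iff (hF : IsCorankTwoFlat M F)
    (hη : HasComplementarySupports (hyperplanesOver M F) η)
    (hS : finrank K (span K (η '' hyperplanesOver M F)) = 2) :
    finrank K ((span K (η '' hyperplanesOver M F)).map (proj K A)) ≤ 1 ↔
      ∃ H ∈ hyperplanesOver M F, A ⊆ H := by
  have : FiniteDimensional K (span K (η '' hyperplanesOver M F)) :=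
    Module.finite_of_finrank_eq_succ hS
  rw [show ∀ n : ℕ, n ≤ 1 ↔ n < 2 by omega, ← hS, Submodule.finrank_map_lt_iff]
  constructor
  · rintro ⟨v, hv, hvA, hv0⟩
    exact hF.exists_superset_of_forall_eq_zero hη hS
      (fun H hH => subset_span (mem_image_of_mem η hH)) hv hv0 (proj_eq_zero_iff.1 hvA)
  · rintro ⟨H, hH, hAH⟩
    exact ⟨η H, subset_span (mem_image_of_mem η hH),
      proj_eq_zero_iff.2 fun a ha => (hη.apply_eq_zero_iff hH).2 (hAH ha), hF.ne_zero hη hH⟩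

lemma finrank_map_proj_eq (hF : IsCorankTwoFlat M F)
    (hη : HasComplementarySupports (hyperplanesOver M F) η)
    (hS : finrank K (span K (η '' hyperplanesOver M F)) = 2) :
    finrank K ((span K (η '' hyperplanesOver M F)).map (proj K A)) =
      mrk M (A ∪ F) - mrk M F := by
  have h₀ := (hF.finrank_map_proj_eq_zero_iff hη (A := A)).trans hF.mrk_union_le_iff.symm
  have h₁ := (hF.finrank_map_proj_le_one_iff hη hS (A := A)).trans
    hF.mrk_union_le_add_one_iff.symm
  have h₂ := (Submodule.finrank_map_le (proj K A) _).trans hS.le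
  have hlo := Matroid.mrk_mono M (subset_union_right (s := A) (t := F))
  have hhi : mrk M (A ∪ F) ≤ mrk M F + 2 := hF.mrk_add_two ▸ Matroid.mrk_mono M (subset_univ _)
  omega

end IsCorankTwoFlat
end Vectors

/-- for a corank-2 flat `F` of `M` and vectors `η_H` (supported on `E ∖ H`) for
the hyperplanes `H ⊇ F`: every triple of pairwise distinct such hyperplanes gives linearly
dependent vectors iff all the `η_H` lie in one 2-dimensional subspace `L`; in that case
`L = span {η_H : H ∈ 𝓗_F}` is unique and `rank_{M_L}(A) = rank_M(A ∪ F) − rank_M(F)`. -/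
theorem stmt8 {K E : Type*} [Field K] [Fintype E] (M : Matroid E) (hME : M.E = Set.univ)
    (F : Set E) (hF : M.IsFlat F) (hcork : mrk M F + 2 = mrk M Set.univ)
    (η : Set E → (E → K))
    (hsupp : ∀ H, IsHyperplaneOf M H → F ⊆ H → Function.support (η H) = Set.univ \ H) :
    ((∀ H₁ H₂ H₃ : Set E, IsHyperplaneOf M H₁ → F ⊆ H₁ → IsHyperplaneOf M H₂ → F ⊆ H₂ →
        IsHyperplaneOf M H₃ → F ⊆ H₃ → H₁ ≠ H₂ → H₁ ≠ H₃ → H₂ ≠ H₃ →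
        ¬ LinearIndependent K ![η H₁, η H₂, η H₃]) ↔
      (∃ L : Submodule K (E → K), Module.finrank K ↥L = 2 ∧
        ∀ H, IsHyperplaneOf M H → F ⊆ H → η H ∈ L)) ∧
    ((∃ L : Submodule K (E → K), Module.finrank K ↥L = 2 ∧
        ∀ H, IsHyperplaneOf M H → F ⊆ H → η H ∈ L) →
      (∀ L : Submodule K (E → K),
        (Module.finrank K ↥L = 2 ∧ ∀ H, IsHyperplaneOf M H → F ⊆ H → η H ∈ L) →
        L = Submodule.span K (η '' {H : Set E | IsHyperplaneOf M H ∧ F ⊆ H})) ∧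
      (∀ N : Matroid E,
        IsMatroidOf N (Submodule.span K (η '' {H : Set E | IsHyperplaneOf M H ∧ F ⊆ H})) →
        ∀ A : Set E, mrk N A = mrk M (A ∪ F) - mrk M F)) := by
  have hcorank : IsCorankTwoFlat M F := ⟨hME, hF, hcork⟩
  have hη : HasComplementarySupports (hyperplanesOver M F) η := fun H hH => hsupp H hH.1 hH.2
  have huniq : ∀ L : Submodule K (E → K),
      (finrank K L = 2 ∧ ∀ H, IsHyperplaneOf M H → F ⊆ H → η H ∈ L) →
      L = span K (η '' hyperplanesOver M F) := fun L ⟨hL, hmem⟩ =>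
    hcorank.eq_span_of_finrank_eq_two hη hL fun H hH => hmem H hH.1 hH.2
  refine ⟨⟨fun h => ⟨_, hcorank.finrank_span_eq_two hη ?_, ?_⟩, ?_⟩,
    fun ⟨L, hL⟩ => ⟨huniq, fun N hN A => ?_⟩⟩
  · exact fun H₁ h₁ H₂ h₂ H₃ h₃ => h H₁ H₂ H₃ h₁.1 h₁.2 h₂.1 h₂.2 h₃.1 h₃.2
  · exact fun H h₁ h₂ => subset_span (mem_image_of_mem η ⟨h₁, h₂⟩)
  · rintro ⟨L, hL, hmem⟩ H₁ H₂ H₃ h₁ hF₁ h₂ hF₂ h₃ hF₃ - - -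
    have : FiniteDimensional K L := Module.finite_of_finrank_eq_succ hL
    refine not_linearIndependent_of_finrank_lt (L := L) ?_ (by simp [hL])
    simp [Fin.forall_fin_succ, hmem H₁ h₁ hF₁, hmem H₂ h₂ hF₂, hmem H₃ h₃ hF₃]
  · rw [hN.2 A]
    exact hcorank.finrank_map_proj_eq hη (huniq L hL ▸ hL.1)
end

section
/- Let K be a field, E a finite type, and W ⊆ K^E a linear subspace. Then a subset C ⊆ E is a cocircuit of the matroid M_W (i.e., the complement of a hyperplane of M_W) if and only if C = supp(w) for some elementary vector w of W. -/
open Set Function Module Submodule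

/-- A cocircuit of a matroid: the complement (in the ground set) of a hyperplane. -/
def IsCocircuitOf {E : Type*} (M : Matroid E) (C : Set E) : Prop :=
  ∃ H, IsHyperplaneOf M H ∧ C = M.E \ H

/-- An elementary vector of `W`: a nonzero element of `W` of support-minimal support. -/
def IsElementary {K E : Type*} [Field K] (W : Submodule K (E → K)) (w : E → K) : Prop :=
  w ∈ W ∧ w ≠ 0 ∧ ∀ v ∈ W, v ≠ 0 → ¬ (Function.support v ⊂ Function.support w)

/-! Rank–nullity for `π_S` restricted to `W` gives `rk S + dim W_S = dim W`, where
`W_S = vanishingOn W S` is the subspace of vectors of `W` vanishing on `S`. Hence `H` is a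
hyperplane iff it is flat and `dim W_H = 1`, and `H` is flat iff it is exactly the common zero
set of `W_H`. So the hyperplanes are the sets `(supp w)ᶜ` with `W_{(supp w)ᶜ} = K ∙ w`, and these
`w` are exactly the elementary vectors: subtracting a suitable multiple of `w` from any other vector
of `W` supported inside `supp w` strictly shrinks its support. -/

lemma Submodule.finrank_map_add_finrank_inf_ker {K V V' : Type*} [Field K] [AddCommGroup V]
    [Module K V] [AddCommGroup V'] [Module K V'] (p : Submodule K V) [FiniteDimensional K p]
    (f : V →ₗ[K] V') :
    finrank K (p.map f) + finrank K ↥(p ⊓ LinearMap.ker f) = finrank K p := by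
  rw [← LinearMap.range_domRestrict, ← (f.domRestrict p).finrank_range_add_finrank_ker,
    LinearMap.ker_domRestrict,
    ← (Submodule.comapSubtypeEquivOfLe (inf_le_left : p ⊓ LinearMap.ker f ≤ p)).finrank_eq,
    Submodule.comap_inf, Submodule.comap_subtype_self, top_inf_eq]

section Matroid

variable {E : Type*} {M : Matroid E} {I S H : Set E}

lemma Matroid.IsBasis'.mrk_eq_ncard [Finite E] (hI : M.IsBasis' I S) : mrk M S = I.ncard := by
  have hle : ∀ n ∈ Set.ncard '' {J | M.Indep J ∧ J ⊆ S}, n ≤ I.ncard := by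
    rintro _ ⟨J, ⟨hJ, hJS⟩, rfl⟩
    have := (hJ.encard_le_eRk_of_subset hJS).trans_eq hI.encard_eq_eRk.symm
    rwa [J.toFinite.cast_ncard_eq.symm, I.toFinite.cast_ncard_eq.symm, Nat.cast_le] at this
  have hmem : I.ncard ∈ Set.ncard '' {J | M.Indep J ∧ J ⊆ S} :=
    ⟨I, ⟨hI.indep, hI.subset⟩, rfl⟩
  exact le_antisymm (csSup_le ⟨_, hmem⟩ hle) (le_csSup ⟨_, hle⟩ hmem)

lemma cast_mrk [Finite E] (M : Matroid E) (S : Set E) : (mrk M S : ℕ∞) = M.eRk S := by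
  obtain ⟨I, hI⟩ := M.exists_isBasis' S
  rw [hI.mrk_eq_ncard, I.toFinite.cast_ncard_eq, hI.encard_eq_eRk]

lemma Matroid.isFlat_iff_forall_mrk_insert_ne [Finite E] (hH : H ⊆ M.E) :
    M.IsFlat H ↔ ∀ e ∈ M.E \ H, mrk M (insert e H) ≠ mrk M H := by
  refine ⟨fun hF e he hrk => ?_, fun h => Matroid.isFlat_iff_closure_eq.2 ?_⟩
  · have := Matroid.eRk_insert_eq_add_one (M := M) (e := e) (X := H) (by rwa [hF.closure])
    rw [← cast_mrk, ← cast_mrk, hrk] at this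
    norm_cast at this
    omega
  · refine (M.subset_closure H hH).antisymm' fun e he => by_contra fun heH => h e
      ⟨M.closure_subset_ground H he, heH⟩ ?_
    rw [← Nat.cast_inj (R := ℕ∞), cast_mrk, cast_mrk, ← M.eRk_closure_eq,
      Matroid.closure_insert_eq_of_mem_closure he, M.eRk_closure_eq]

end Matroid

section Linear

variable {K E : Type*} [Field K]

def vanishingOn (W : Submodule K (E → K)) (S : Set E) : Submodule K (E → K) :=
  W ⊓ LinearMap.ker (proj K S)

variable {W : Submodule K (E → K)} {S : Set E} {v w : E → K}

lemma mem_vanishingOn : v ∈ vanishingOn W S ↔ v ∈ W ∧ ∀ i ∈ S, v i = 0 := by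
  simp only [vanishingOn, Submodule.mem_inf, LinearMap.mem_ker, funext_iff, Subtype.forall]
  rfl

lemma mem_vanishingOn_compl_support :
    v ∈ vanishingOn W (support w)ᶜ ↔ v ∈ W ∧ support v ⊆ support w := by
  simp only [mem_vanishingOn, Set.mem_compl_iff, Function.mem_support, not_not]
  exact and_congr_right fun _ => forall_congr' fun i => not_imp_not.symm

lemma vanishingOn_univ : vanishingOn W (univ : Set E) = ⊥ :=
  eq_bot_iff.2 fun _ hv =>
    (Submodule.mem_bot K).2 <| funext fun i => (mem_vanishingOn.1 hv).2 i (mem_univ i)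

lemma vanishingOn_anti {T : Set E} (hST : S ⊆ T) : vanishingOn W T ≤ vanishingOn W S :=
  fun _ hv =>
    mem_vanishingOn.2 ⟨(mem_vanishingOn.1 hv).1, fun i hi => (mem_vanishingOn.1 hv).2 i (hST hi)⟩

lemma vanishingOn_insert_eq_iff {e : E} :
    vanishingOn W (insert e S) = vanishingOn W S ↔ ∀ v ∈ vanishingOn W S, v e = 0 := by
  simp only [SetLike.ext_iff, mem_vanishingOn, Set.forall_mem_insert]
  exact ⟨fun h v hv => ((h v).2 hv).2.1, fun h v => ⟨fun hv => ⟨hv.1, hv.2.2⟩,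
    fun hv => ⟨hv.1, h v hv, hv.2⟩⟩⟩

lemma support_sub_smul_ssubset {i : E} (hi : w i ≠ 0) (hvw : support v ⊆ support w) :
    support (v - (v i / w i) • w) ⊂ support w := by
  refine ssubset_of_subset_not_subset (fun j hj => ?_) fun h => h hi ?_
  · by_contra hwj
    have hvj : v j = 0 := by_contra fun h => hwj (hvw h)
    simp_all
  · simp [hi]

theorem isElementary_iff_vanishingOn_eq_span :
    IsElementary W w ↔ w ≠ 0 ∧ vanishingOn W (support w)ᶜ = K ∙ w := by
  have hw : w ∈ vanishingOn W (support w)ᶜ ↔ w ∈ W := by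
    simp [mem_vanishingOn_compl_support]
  refine ⟨fun ⟨hwW, hw0, hmin⟩ => ⟨hw0, le_antisymm (fun v hv => ?_)
      ((Submodule.span_singleton_le_iff_mem _ _).2 (hw.2 hwW))⟩,
    fun ⟨hw0, hspan⟩ => ⟨hw.1 (hspan ▸ Submodule.mem_span_singleton_self w), hw0,
      fun v hvW hv0 hvw => ?_⟩⟩
  · obtain ⟨hvW, hvw⟩ := mem_vanishingOn_compl_support.1 hv
    obtain ⟨i, hi⟩ := Function.support_nonempty_iff.2 hw0
    have hu : v - (v i / w i) • w = 0 := by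
      by_contra hu
      exact hmin _ (sub_mem hvW (W.smul_mem _ hwW)) hu (support_sub_smul_ssubset hi hvw)
    rw [sub_eq_zero.1 hu]
    exact Submodule.smul_mem _ _ (Submodule.mem_span_singleton_self w)
  · have hv : v ∈ K ∙ w := hspan ▸ mem_vanishingOn_compl_support.2 ⟨hvW, hvw.subset⟩
    obtain ⟨c, rfl⟩ := Submodule.mem_span_singleton.1 hv
    have hc : c ≠ 0 := by rintro rfl; exact hv0 (zero_smul K w)
    exact hvw.ne (Function.support_const_smul_of_ne_zero c w hc)

end Linear

namespace IsMatroidOf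

variable {K E : Type*} [Field K] [Finite E] {W : Submodule K (E → K)} {M : Matroid E}
  {H : Set E}

lemma mrk_add_finrank_vanishingOn (hM : IsMatroidOf M W) (S : Set E) :
    mrk M S + finrank K (vanishingOn W S) = finrank K W := by
  rw [hM.2]
  exact W.finrank_map_add_finrank_inf_ker (proj K S)

lemma mrk_insert_eq_iff (hM : IsMatroidOf M W) {S : Set E} {e : E} :
    mrk M (insert e S) = mrk M S ↔ ∀ v ∈ vanishingOn W S, v e = 0 := by
  have hS := hM.mrk_add_finrank_vanishingOn S
  have heS := hM.mrk_add_finrank_vanishingOn (insert e S)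
  rw [← vanishingOn_insert_eq_iff]
  refine ⟨fun h => eq_of_le_of_finrank_eq (vanishingOn_anti (subset_insert e S)) (by omega),
    fun h => by rw [h] at heS; omega⟩

lemma isFlat_iff (hM : IsMatroidOf M W) :
    M.IsFlat H ↔ ∀ e ∉ H, ∃ v ∈ vanishingOn W H, v e ≠ 0 := by
  simp only [Matroid.isFlat_iff_forall_mrk_insert_ne (hM.1 ▸ subset_univ H), hM.1, mem_sdiff,
    mem_univ, true_and, ne_eq, hM.mrk_insert_eq_iff, not_forall, exists_prop]

lemma isHyperplaneOf_iff (hM : IsMatroidOf M W) :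
    IsHyperplaneOf M H ↔ M.IsFlat H ∧ finrank K (vanishingOn W H) = 1 := by
  have hH := hM.mrk_add_finrank_vanishingOn H
  have huniv := hM.mrk_add_finrank_vanishingOn univ
  rw [vanishingOn_univ, finrank_bot] at huniv
  rw [IsHyperplaneOf, hM.1]
  exact and_congr_right fun _ => by omega

theorem isHyperplaneOf_iff_exists_isElementary (hM : IsMatroidOf M W) :
    IsHyperplaneOf M H ↔ ∃ w, IsElementary W w ∧ support w = Hᶜ := by
  rw [hM.isHyperplaneOf_iff, hM.isFlat_iff]
  constructor
  · rintro ⟨hflat, hone⟩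
    obtain ⟨w, hwV, hw0⟩ := Submodule.exists_mem_ne_zero_of_ne_bot
      fun h : vanishingOn W H = ⊥ => by rw [h, finrank_bot] at hone; exact zero_ne_one hone
    have hspan : vanishingOn W H = K ∙ w := (eq_of_le_of_finrank_eq
      ((Submodule.span_singleton_le_iff_mem _ _).2 hwV)
      (by rw [finrank_span_singleton hw0, hone])).symm
    have hsupp : support w = Hᶜ := by
      refine Set.ext fun e => ⟨fun he heH => he ((mem_vanishingOn.1 hwV).2 e heH), fun he => ?_⟩
      obtain ⟨v, hv, hve⟩ := hflat e he
      obtain ⟨c, rfl⟩ := Submodule.mem_span_singleton.1 (hspan ▸ hv)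
      exact right_ne_zero_of_mul hve
    exact ⟨w, isElementary_iff_vanishingOn_eq_span.2 ⟨hw0, by rwa [hsupp, compl_compl]⟩, hsupp⟩
  · rintro ⟨w, hw, hsupp⟩
    obtain ⟨hw0, hspan⟩ := isElementary_iff_vanishingOn_eq_span.1 hw
    rw [hsupp, compl_compl] at hspan
    refine ⟨fun e he => ⟨w, hspan ▸ Submodule.mem_span_singleton_self w, ?_⟩,
      by rw [hspan, finrank_span_singleton hw0]⟩
    exact (hsupp ▸ he : e ∈ support w)

end IsMatroidOf

/-- `C ⊆ E` is a cocircuit of the matroid `M_W` iff `C` is the support of an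
elementary vector of `W`. -/
theorem stmt13 {K E : Type*} [Field K] [Fintype E] (W : Submodule K (E → K))
    (M : Matroid E) (hM : IsMatroidOf M W) (C : Set E) :
    IsCocircuitOf M C ↔ ∃ w : E → K, IsElementary W w ∧ C = Function.support w := by
  simp only [IsCocircuitOf, hM.isHyperplaneOf_iff_exists_isElementary, hM.1]
  constructor
  · rintro ⟨H, ⟨w, hw, hsupp⟩, rfl⟩
    exact ⟨w, hw, by rw [← compl_eq_univ_sdiff, ← hsupp]⟩
  · rintro ⟨w, hw, rfl⟩
    refine ⟨(support w)ᶜ, ⟨w, hw, (compl_compl _).symm⟩, ?_⟩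
    rw [← compl_eq_univ_sdiff, compl_compl]
end
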